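/- Suppose L is even and the L×L matrices R, V, T satisfy the chiral relations KRK = −R, KVK = −V, KTK = −T, where K = diag(1_{L/2}, −1_{L/2}), and R, T are invertible. Then the 2L×2L matrix K⊗σ₃ := diag(K, −K) conjugates the transfer matrices: (K⊗σ₃) 𝒯^E (K⊗σ₃) = 𝒯^{−E} for all E ∈ ℂ. Consequently det(𝒯^E − z·1) = det(𝒯^{−E} − z·1) for all z, so 𝒯^E and 𝒯^{−E} have the same eigenvalues. -/

import Mathlib

open Matrix

noncomputable section

/-- The transfer matrix `𝒯^E = ((E·1 − V)T⁻¹, −R; T⁻¹, 0)` over index type `α ⊕ α`. -/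
def transferMatrix {α : Type*} [Fintype α] [DecidableEq α]
    (R V T : Matrix α α ℂ) (E : ℂ) : Matrix (α ⊕ α) (α ⊕ α) ℂ :=
  Matrix.fromBlocks ((E • (1 : Matrix α α ℂ) - V) * T⁻¹) (-R) T⁻¹ 0

/-- The chiral symmetry `K = diag(1_{L/2}, −1_{L/2})` on `ℂ^{2m}` (here `L = 2m`). -/
def chiralK (m : ℕ) : Matrix (Fin m ⊕ Fin m) (Fin m ⊕ Fin m) ℂ :=
  Matrix.fromBlocks 1 0 0 (-1)

/-- The doubled symmetry `K ⊗ σ₃ = diag(K, −K)` acting on `ℂ^{2L}`. -/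
def chiralKSigma3 (m : ℕ) :
    Matrix ((Fin m ⊕ Fin m) ⊕ (Fin m ⊕ Fin m)) ((Fin m ⊕ Fin m) ⊕ (Fin m ⊕ Fin m)) ℂ :=
  Matrix.fromBlocks (chiralK m) 0 0 (-(chiralK m))

/-!
Conjugation by the involution `K` flips the sign of `R`, `V`, `T` and hence of `T⁻¹`, so it maps
`(E - V)T⁻¹` to `(E + V)(-T⁻¹) = (-E - V)T⁻¹`. Conjugating the blocks by `diag(K, -K)` multiplies
the off-diagonal blocks by an extra `-1`, which restores `-R` and `T⁻¹`. Since `diag(K, -K)` is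
itself an involution, `𝒯^E` and `𝒯^{-E}` are similar, so they share characteristic determinants
and spectra.
-/

section Involution

variable {M : Type*} [Monoid M] {K : M}

theorem conj_mul_of_mul_self_eq_one (hK : K * K = 1) (X Y : M) :
    K * (X * Y) * K = (K * X * K) * (K * Y * K) := by
  calc K * (X * Y) * K = K * X * 1 * Y * K := by simp only [mul_one, mul_assoc]
    _ = K * X * (K * K) * Y * K := by rw [hK]
    _ = (K * X * K) * (K * Y * K) := by simp only [mul_assoc]

theorem spectrum_eq_of_conj_of_mul_self_eq_one {R A : Type*} [CommSemiring R] [Ring A]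
    [Algebra R A] {S a b : A} (hS : S * S = 1) (hb : S * a * S = b) :
    spectrum R a = spectrum R b := by
  rw [← hb]
  exact (spectrum.units_conjugate (u := ⟨S, S, hS, hS⟩)).symm

end Involution

namespace Matrix

variable {n : Type*} [Fintype n] [DecidableEq n] {α : Type*} [CommRing α]

theorem conj_inv_eq_neg_inv_of_conj_eq_neg {K A : Matrix n n α} (hK : K * K = 1)
    (hA : K * A * K = -A) : K * A⁻¹ * K = -A⁻¹ := by
  have hA' : -K * A * K = A := by rw [neg_mul, neg_mul, hA, neg_neg]
  have hnegK : -K * -K = 1 := by rw [neg_mul_neg, hK]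
  -- `mul_inv_rev` holds for the junk inverse too, so `A` need not be invertible.
  have hinv : A⁻¹ = K * A⁻¹ * -K := by
    conv_lhs => rw [← hA']
    rw [mul_inv_rev, mul_inv_rev, inv_eq_left_inv hK, inv_eq_left_inv hnegK, mul_assoc]
  calc K * A⁻¹ * K = -(K * A⁻¹ * -K) := by rw [mul_neg, neg_neg]
    _ = -A⁻¹ := by rw [← hinv]

theorem det_sub_smul_one_eq_of_conj {S A B : Matrix n n α} (hS : S * S = 1)
    (hB : S * A * S = B) (z : α) : (A - z • 1).det = (B - z • 1).det := by
  let u : (Matrix n n α)ˣ := ⟨S, S, hS, hS⟩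
  have hconj : B - z • 1 = (u : Matrix n n α) * (A - z • 1) * (↑u⁻¹ : Matrix n n α) := by
    simp [u, ← hB, mul_sub, sub_mul, hS]
  rw [hconj, det_units_conj]

variable {m : Type*} [Fintype m] [DecidableEq m]

theorem fromBlocks_diag_neg_conj (K A B C D : Matrix m m α) :
    fromBlocks K 0 0 (-K) * fromBlocks A B C D * fromBlocks K 0 0 (-K)
      = fromBlocks (K * A * K) (-(K * B * K)) (-(K * C * K)) (K * D * K) := by
  simp [fromBlocks_multiply]

theorem fromBlocks_diag_neg_mul_self {K : Matrix m m α}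
    (hK : K * K = 1) : fromBlocks K 0 0 (-K) * fromBlocks K 0 0 (-K) = 1 := by
  simp [fromBlocks_multiply, hK]

end Matrix

open Matrix

theorem transferMatrix_conj {α : Type*} [Fintype α] [DecidableEq α] {K R V T : Matrix α α ℂ}
    (hK : K * K = 1) (hR : K * R * K = -R) (hV : K * V * K = -V) (hT : K * T * K = -T)
    (E : ℂ) :
    fromBlocks K 0 0 (-K) * transferMatrix R V T E * fromBlocks K 0 0 (-K)
      = transferMatrix R V T (-E) := by
  have hTinv := conj_inv_eq_neg_inv_of_conj_eq_neg hK hT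
  have hshift : K * (E • 1 - V) * K = -((-E) • 1 - V) := by
    rw [mul_sub, sub_mul, hV, mul_smul_comm, smul_mul_assoc, mul_one, hK, neg_smul]
    abel
  rw [transferMatrix, transferMatrix, fromBlocks_diag_neg_conj, conj_mul_of_mul_self_eq_one hK,
    hshift, hTinv, neg_mul_neg, mul_neg, neg_mul, hR, neg_neg, neg_neg, mul_zero, zero_mul]

theorem chiralK_mul_self (m : ℕ) : chiralK m * chiralK m = 1 := by
  simp [chiralK, fromBlocks_multiply]

theorem chiral_transfer_conjugation_general (m : ℕ)
    (R V T : Matrix (Fin m ⊕ Fin m) (Fin m ⊕ Fin m) ℂ)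
    (hR : chiralK m * R * chiralK m = -R)
    (hV : chiralK m * V * chiralK m = -V)
    (hT : chiralK m * T * chiralK m = -T)
    (E : ℂ) :
    chiralKSigma3 m * transferMatrix R V T E * chiralKSigma3 m
        = transferMatrix R V T (-E) ∧
      (∀ z : ℂ,
        (transferMatrix R V T E - z • 1).det
          = (transferMatrix R V T (-E) - z • 1).det) ∧
      spectrum ℂ (transferMatrix R V T E) = spectrum ℂ (transferMatrix R V T (-E)) := by
  have hK := chiralK_mul_self m
  have hconj : chiralKSigma3 m * transferMatrix R V T E * chiralKSigma3 m
      = transferMatrix R V T (-E) := transferMatrix_conj hK hR hV hT E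
  have hS : chiralKSigma3 m * chiralKSigma3 m = 1 := fromBlocks_diag_neg_mul_self hK
  exact ⟨hconj, det_sub_smul_one_eq_of_conj hS hconj,
    spectrum_eq_of_conj_of_mul_self_eq_one hS hconj⟩

theorem chiral_transfer_conjugation (m : ℕ) (hm : 1 ≤ m)
    (R V T : Matrix (Fin m ⊕ Fin m) (Fin m ⊕ Fin m) ℂ)
    (hRu : IsUnit R.det) (hTu : IsUnit T.det)
    (hR : chiralK m * R * chiralK m = -R)
    (hV : chiralK m * V * chiralK m = -V)
    (hT : chiralK m * T * chiralK m = -T)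
    (E : ℂ) :
    chiralKSigma3 m * transferMatrix R V T E * chiralKSigma3 m
        = transferMatrix R V T (-E) ∧
      (∀ z : ℂ,
        (transferMatrix R V T E - z • 1).det
          = (transferMatrix R V T (-E) - z • 1).det) ∧
      spectrum ℂ (transferMatrix R V T E) = spectrum ℂ (transferMatrix R V T (-E)) :=
  chiral_transfer_conjugation_general m R V T hR hV hT E
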